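/- Preservation of the discrete divergence by the three-stage Runge–Kutta constrained-transport update: let Δx, Δy, Δt > 0, let Ω⁰, Ω¹, Ω² : ℤ × ℤ → ℝ be arbitrary corner electric fields, and define the curl-type increments C¹(Ω)_{j+½,k} = −(Ω_{j+½,k+½} − Ω_{j+½,k−½})/Δy and C²(Ω)_{j,k+½} = (Ω_{j+½,k+½} − Ω_{j−½,k+½})/Δx. Given face fields B₁ⁿ, B₂ⁿ, define the stages B^{(1)} = Bⁿ + Δt·C(Ω⁰), B^{(2)} = B^{(1)} + (Δt/4)(−3C(Ω⁰) + C(Ω¹)), and B^{n+1} = B^{(2)} + (Δt/12)(−C(Ω⁰) − C(Ω¹) + 8C(Ω²)), applied componentwise to (B₁, B₂). Then for every cell (j,k), the discrete divergence (∇·B^{n+1})_{j,k} = (B₁^{n+1}{}_{j+½,k} − B₁^{n+1}{}_{j−½,k})/Δx + (B₂^{n+1}{}_{j,k+½} − B₂^{n+1}{}_{j,k−½})/Δy equals (∇·Bⁿ)_{j,k}; in particular, if the initial discrete divergence vanishes it vanishes for all stages. -/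

import Mathlib

/-!
The corner-to-face discrete curl is linear and its discrete divergence vanishes identically, the
two mixed second differences of the corner field cancelling. Each Runge–Kutta stage adds to `Bⁿ`
a linear combination of the curls of `Ω⁰, Ω¹, Ω²`, that is the curl of one corner field, and so
leaves the discrete divergence of `Bⁿ` unchanged.
-/

/-- Discrete divergence at cell `(j,k)` of face fields `B1` (at `(j+½,k)`)
and `B2` (at `(j,k+½)`). -/
noncomputable def discreteDiv (Δx Δy : ℝ) (B1 B2 : ℤ × ℤ → ℝ) (j k : ℤ) : ℝ :=
  (B1 (j, k) - B1 (j - 1, k)) / Δx + (B2 (j, k) - B2 (j, k - 1)) / Δy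

/-- `Ω (j, k)` is the corner value `Ω_{j+½,k+½}`; the result lives on the face `(j+½, k)`. -/
noncomputable def discreteCurlX (Δy : ℝ) : (ℤ × ℤ → ℝ) →ₗ[ℝ] ℤ × ℤ → ℝ where
  toFun Ω p := -(Ω p - Ω (p.1, p.2 - 1)) / Δy
  map_add' Ω Ψ := by ext p; simp only [Pi.add_apply]; ring
  map_smul' c Ω := by ext p; simp only [Pi.smul_apply, smul_eq_mul, RingHom.id_apply]; ring

/-- `Ω (j, k)` is the corner value `Ω_{j+½,k+½}`; the result lives on the face `(j, k+½)`. -/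
noncomputable def discreteCurlY (Δx : ℝ) : (ℤ × ℤ → ℝ) →ₗ[ℝ] ℤ × ℤ → ℝ where
  toFun Ω p := (Ω p - Ω (p.1 - 1, p.2)) / Δx
  map_add' Ω Ψ := by ext p; simp only [Pi.add_apply]; ring
  map_smul' c Ω := by ext p; simp only [Pi.smul_apply, smul_eq_mul, RingHom.id_apply]; ring

lemma discreteDiv_add (Δx Δy : ℝ) (B1 B2 D1 D2 : ℤ × ℤ → ℝ) (j k : ℤ) :
    discreteDiv Δx Δy (B1 + D1) (B2 + D2) j k =
      discreteDiv Δx Δy B1 B2 j k + discreteDiv Δx Δy D1 D2 j k := by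
  simp only [discreteDiv, Pi.add_apply]
  ring

lemma discreteDiv_discreteCurl (Δx Δy : ℝ) (Ω : ℤ × ℤ → ℝ) (j k : ℤ) :
    discreteDiv Δx Δy (discreteCurlX Δy Ω) (discreteCurlY Δx Ω) j k = 0 := by
  simp only [discreteDiv, discreteCurlX, discreteCurlY, LinearMap.coe_mk, AddHom.coe_mk]
  ring

lemma discreteDiv_add_discreteCurl (Δx Δy : ℝ) (B1 B2 Ω : ℤ × ℤ → ℝ) (j k : ℤ) :
    discreteDiv Δx Δy (B1 + discreteCurlX Δy Ω) (B2 + discreteCurlY Δx Ω) j k =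
      discreteDiv Δx Δy B1 B2 j k := by
  rw [discreteDiv_add, discreteDiv_discreteCurl, add_zero]

theorem constrained_transport_rk3_divergence_preserved_general
    (Δx Δy Δt : ℝ)
    (Ω0 Ω1 Ω2 : ℤ × ℤ → ℝ)
    (C1 C2 : (ℤ × ℤ → ℝ) → ℤ × ℤ → ℝ)
    (hC1 : ∀ (Ω : ℤ × ℤ → ℝ) (j k : ℤ),
      C1 Ω (j, k) = -(Ω (j, k) - Ω (j, k - 1)) / Δy)
    (hC2 : ∀ (Ω : ℤ × ℤ → ℝ) (j k : ℤ),
      C2 Ω (j, k) = (Ω (j, k) - Ω (j - 1, k)) / Δx)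
    (B1n B2n B1a B2a B1b B2b B1c B2c : ℤ × ℤ → ℝ)
    (hB1a : ∀ p, B1a p = B1n p + Δt * C1 Ω0 p)
    (hB2a : ∀ p, B2a p = B2n p + Δt * C2 Ω0 p)
    (hB1b : ∀ p, B1b p = B1a p + Δt / 4 * (-3 * C1 Ω0 p + C1 Ω1 p))
    (hB2b : ∀ p, B2b p = B2a p + Δt / 4 * (-3 * C2 Ω0 p + C2 Ω1 p))
    (hB1c : ∀ p, B1c p = B1b p + Δt / 12 * (-C1 Ω0 p - C1 Ω1 p + 8 * C1 Ω2 p))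
    (hB2c : ∀ p, B2c p = B2b p + Δt / 12 * (-C2 Ω0 p - C2 Ω1 p + 8 * C2 Ω2 p)) :
    ∀ j k : ℤ,
      discreteDiv Δx Δy B1c B2c j k = discreteDiv Δx Δy B1n B2n j k ∧
      (discreteDiv Δx Δy B1n B2n j k = 0 →
        discreteDiv Δx Δy B1a B2a j k = 0 ∧
        discreteDiv Δx Δy B1b B2b j k = 0 ∧
        discreteDiv Δx Δy B1c B2c j k = 0) := by
  obtain rfl : C1 = discreteCurlX Δy := funext fun Ω => funext fun ⟨j, k⟩ => hC1 Ω j k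
  obtain rfl : C2 = discreteCurlY Δx := funext fun Ω => funext fun ⟨j, k⟩ => hC2 Ω j k
  intro j k
  have stage_a : discreteDiv Δx Δy B1a B2a j k = discreteDiv Δx Δy B1n B2n j k := by
    obtain ⟨rfl, rfl⟩ : B1a = B1n + discreteCurlX Δy (Δt • Ω0) ∧
        B2a = B2n + discreteCurlY Δx (Δt • Ω0) := by
      constructor <;> ext p <;>
        simp only [hB1a, hB2a, map_smul, Pi.add_apply, Pi.smul_apply, smul_eq_mul]
    exact discreteDiv_add_discreteCurl ..
  have stage_b : discreteDiv Δx Δy B1b B2b j k = discreteDiv Δx Δy B1n B2n j k := by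
    obtain ⟨rfl, rfl⟩ : B1b = B1n + discreteCurlX Δy ((Δt / 4) • (Ω0 + Ω1)) ∧
        B2b = B2n + discreteCurlY Δx ((Δt / 4) • (Ω0 + Ω1)) := by
      constructor <;> ext p <;>
        simp only [hB1b, hB2b, hB1a, hB2a, map_add, map_smul, Pi.add_apply, Pi.smul_apply,
          smul_eq_mul] <;> ring
    exact discreteDiv_add_discreteCurl ..
  have stage_c : discreteDiv Δx Δy B1c B2c j k = discreteDiv Δx Δy B1n B2n j k := by
    obtain ⟨rfl, rfl⟩ : B1c = B1n + discreteCurlX Δy ((Δt / 6) • (Ω0 + Ω1 + (4 : ℝ) • Ω2)) ∧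
        B2c = B2n + discreteCurlY Δx ((Δt / 6) • (Ω0 + Ω1 + (4 : ℝ) • Ω2)) := by
      constructor <;> ext p <;>
        simp only [hB1c, hB2c, hB1b, hB2b, hB1a, hB2a, map_add, map_smul, Pi.add_apply,
          Pi.smul_apply, smul_eq_mul] <;> ring
    exact discreteDiv_add_discreteCurl ..
  exact ⟨stage_c, fun h => ⟨stage_a.trans h, stage_b.trans h, stage_c.trans h⟩⟩

/-- Preservation of the discrete divergence by the three-stage Runge–Kutta
constrained-transport update. -/
theorem constrained_transport_rk3_divergence_preserved
    (Δx Δy Δt : ℝ) (hΔx : 0 < Δx) (hΔy : 0 < Δy) (hΔt : 0 < Δt)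
    (Ω0 Ω1 Ω2 : ℤ × ℤ → ℝ)
    (C1 C2 : (ℤ × ℤ → ℝ) → ℤ × ℤ → ℝ)
    (hC1 : ∀ (Ω : ℤ × ℤ → ℝ) (j k : ℤ),
      C1 Ω (j, k) = -(Ω (j, k) - Ω (j, k - 1)) / Δy)
    (hC2 : ∀ (Ω : ℤ × ℤ → ℝ) (j k : ℤ),
      C2 Ω (j, k) = (Ω (j, k) - Ω (j - 1, k)) / Δx)
    (B1n B2n B1a B2a B1b B2b B1c B2c : ℤ × ℤ → ℝ)
    (hB1a : ∀ p, B1a p = B1n p + Δt * C1 Ω0 p)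
    (hB2a : ∀ p, B2a p = B2n p + Δt * C2 Ω0 p)
    (hB1b : ∀ p, B1b p = B1a p + Δt / 4 * (-3 * C1 Ω0 p + C1 Ω1 p))
    (hB2b : ∀ p, B2b p = B2a p + Δt / 4 * (-3 * C2 Ω0 p + C2 Ω1 p))
    (hB1c : ∀ p, B1c p = B1b p + Δt / 12 * (-C1 Ω0 p - C1 Ω1 p + 8 * C1 Ω2 p))
    (hB2c : ∀ p, B2c p = B2b p + Δt / 12 * (-C2 Ω0 p - C2 Ω1 p + 8 * C2 Ω2 p)) :
    ∀ j k : ℤ,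
      discreteDiv Δx Δy B1c B2c j k = discreteDiv Δx Δy B1n B2n j k ∧
      (discreteDiv Δx Δy B1n B2n j k = 0 →
        discreteDiv Δx Δy B1a B2a j k = 0 ∧
        discreteDiv Δx Δy B1b B2b j k = 0 ∧
        discreteDiv Δx Δy B1c B2c j k = 0) :=
  constrained_transport_rk3_divergence_preserved_general Δx Δy Δt Ω0 Ω1 Ω2 C1 C2 hC1 hC2 B1n B2n B1a
    B2a B1b B2b B1c B2c hB1a hB2a hB1b hB2b hB1c hB2c
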